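/- arXiv:1206.2251 — 6 statements merged into one kernel-verified Lean document; each statement's English description precedes it below -/
import Mathlib

section
/- Let (H_N) be a sequence of standard symmetric Wigner matrices of size N built from fixed distributions ν (off-diagonal) and ν̃ (diagonal). If it is NOT the case that lim_{s→∞} s⁴·P(|x₁₂| ≥ s) = 0, then limsup_{N→∞} P(λ_N(H_N) ≥ 3) > 0. -/
open MeasureTheory ProbabilityTheory Filter

/-- The largest eigenvalue of a real matrix, defined as the supremum of the set of its
(real) eigenvalues. -/
noncomputable def maxEig {N : ℕ} (A : Matrix (Fin N) (Fin N) ℝ) : ℝ :=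
  sSup {t : ℝ | ∃ v : Fin N → ℝ, v ≠ 0 ∧ A.mulVec v = t • v}

/-- The standard symmetric Wigner matrix of size `N` built from the array `x` of random
variables: `(H_N)_{ij} = N^{-1/2} x_{ij}` (with `x` symmetrized via `min`/`max`). -/
noncomputable def wignerMat {Ω : Type} (x : ℕ → ℕ → Ω → ℝ) (N : ℕ) (ω : Ω) :
    Matrix (Fin N) (Fin N) ℝ :=
  Matrix.of fun i j : Fin N =>
    ((N : ℝ) ^ (-(1 / 2 : ℝ))) * x (min i.1 j.1) (max i.1 j.1) ω

/-!
If `s⁴ P(|x₁₂| ≥ s) ≥ ε` for arbitrarily large `s`, then `m = ⌊s² / (2(K + 3)²)⌋` gives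
infinitely many `m` with `m² P(|x₁₂| ≥ (K + 3)√(2m)) ≥ β > 0`. For `N = 2m`, some of the `m²`
independent entries `x_{a, a+b+1}` (`a, b < m`) exceeds `(K + 3)√N` with probability at least
`1 - e^{-β}`, and, independently, Chebyshev's inequality with `K² ≥ 2 E x₁₁²` keeps all diagonal
entries below `K√N` with probability at least `1/2`. On both events the test vector `e_i ± e_j` has Rayleigh quotient
`(H_ii + H_jj)/2 + |H_ij| ≥ -K + (K + 3) = 3`.
-/

open scoped InnerProductSpace
open Matrix Module End Finset

theorem LinearMap.IsSymmetric.exists_hasEigenvalue_rayleigh_le {𝕜 E : Type*} [RCLike 𝕜]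
    [NormedAddCommGroup E] [InnerProductSpace 𝕜 E] [FiniteDimensional 𝕜 E] {T : E →ₗ[𝕜] E}
    (hT : T.IsSymmetric) {v : E} (hv : v ≠ 0) :
    ∃ μ : ℝ, HasEigenvalue T μ ∧ RCLike.re ⟪T v, v⟫_𝕜 / ‖v‖ ^ 2 ≤ μ := by
  have : Nontrivial E := ⟨⟨v, 0, hv⟩⟩
  refine ⟨_, hT.hasEigenvalue_iSup_of_finiteDimensional, le_ciSup
    (f := fun x : {x : E // x ≠ 0} => RCLike.re ⟪T x, x⟫_𝕜 / ‖(x : E)‖ ^ 2) ?_ ⟨v, hv⟩⟩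
  refine ⟨‖LinearMap.toContinuousLinearMap T‖, ?_⟩
  rintro _ ⟨x, rfl⟩
  exact (le_abs_self _).trans ((LinearMap.toContinuousLinearMap T).rayleighQuotient_le_norm x)

theorem Matrix.bddAbove_eigenvalues {n : Type*} [Fintype n] [DecidableEq n] (A : Matrix n n ℝ) :
    BddAbove {t : ℝ | ∃ v : n → ℝ, v ≠ 0 ∧ A *ᵥ v = t • v} :=
  (Module.End.finite_hasEigenvalue (toLin' A)).bddAbove.mono <| by
    rintro t ⟨v, hv, hAv⟩
    exact hasEigenvalue_of_hasEigenvector (hasEigenvector_iff.2 ⟨mem_eigenspace_iff.2 hAv, hv⟩)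

theorem Matrix.IsHermitian.dotProduct_mulVec_div_le_maxEig {N : ℕ}
    {A : Matrix (Fin N) (Fin N) ℝ} (hA : A.IsHermitian) {v : Fin N → ℝ} (hv : v ≠ 0) :
    v ⬝ᵥ A *ᵥ v / (v ⬝ᵥ v) ≤ maxEig A := by
  obtain ⟨μ, hμ, hle⟩ := (isSymmetric_toEuclideanLin_iff.2 hA).exists_hasEigenvalue_rayleigh_le
    (v := WithLp.toLp 2 v) (by simpa using hv)
  obtain ⟨w, hw⟩ := hμ.exists_hasEigenvector
  refine le_trans ?_
    (le_csSup (a := μ) A.bddAbove_eigenvalues ⟨WithLp.ofLp w, by simpa using hw.2, ?_⟩)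
  · rw [← real_inner_self_eq_norm_sq] at hle
    simp only [RCLike.re_to_real, EuclideanSpace.inner_toLp_toLp] at hle
    exact hle
  · simpa using congrArg WithLp.ofLp (mem_eigenspace_iff.1 hw.1)

theorem Matrix.IsHermitian.diag_add_abs_le_maxEig {N : ℕ} {A : Matrix (Fin N) (Fin N) ℝ}
    (hA : A.IsHermitian) {i j : Fin N} (hij : i ≠ j) :
    (A i i + A j j) / 2 + |A i j| ≤ maxEig A := by
  have key : ∀ σ : ℝ, σ ^ 2 = 1 → (A i i + A j j) / 2 + σ * A i j ≤ maxEig A := by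
    intro σ hσ
    set v : Fin N → ℝ := Pi.single i 1 + Pi.single j σ
    have hAji : A j i = A i j := hA.apply i j
    have hv : v ≠ 0 := fun h => by simpa [v, hij] using congrFun h i
    have hform : v ⬝ᵥ A *ᵥ v = A i i + 2 * σ * A i j + σ ^ 2 * A j j := by
      simp only [v, mulVec_add, mulVec_single, MulOpposite.op_one, one_smul, op_smul_eq_smul,
        dotProduct_add, add_dotProduct, single_dotProduct, dotProduct_smul, col_apply, one_mul,
        smul_eq_mul, hAji]
      ring
    have hnorm : v ⬝ᵥ v = 2 := by
      simp only [v, dotProduct_add, dotProduct_single, Pi.add_apply, Pi.single_eq_same,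
        Pi.single_eq_of_ne hij, Pi.single_eq_of_ne hij.symm, add_zero, zero_add, ← sq, one_pow, hσ]
      norm_num
    have := hA.dotProduct_mulVec_div_le_maxEig hv
    rw [hform, hnorm, hσ] at this
    linarith
  rcases abs_choice (A i j) with h | h <;> rw [h]
  · simpa using key 1 (by norm_num)
  · simpa using key (-1) (by norm_num)

theorem wignerMat_isHermitian {Ω : Type} (x : ℕ → ℕ → Ω → ℝ) (N : ℕ) (ω : Ω) :
    (wignerMat x N ω).IsHermitian := by
  ext i j
  simp [wignerMat, min_comm, max_comm]

theorem wignerMat_apply_of_le {Ω : Type} (x : ℕ → ℕ → Ω → ℝ) {N : ℕ} (ω : Ω) {i j : Fin N}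
    (hij : i ≤ j) : wignerMat x N ω i j = x i j ω / √N := by
  simp [wignerMat, min_eq_left (Fin.le_def.1 hij), max_eq_right (Fin.le_def.1 hij),
    Real.sqrt_eq_rpow, Real.rpow_neg, div_eq_inv_mul]

theorem three_le_maxEig_wignerMat {Ω : Type} {x : ℕ → ℕ → Ω → ℝ} {N : ℕ} {ω : Ω} {K : ℝ}
    {i j : ℕ} (hij : i < j) (hjN : j < N) (hi : |x i i ω| < K * √N) (hj : |x j j ω| < K * √N)
    (hoff : (K + 3) * √N ≤ |x i j ω|) : 3 ≤ maxEig (wignerMat x N ω) := by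
  have hN : 0 < √N := Real.sqrt_pos.2 (Nat.cast_pos.2 (by omega))
  have key := (wignerMat_isHermitian x N ω).diag_add_abs_le_maxEig
    (i := ⟨i, hij.trans hjN⟩) (j := ⟨j, hjN⟩) (Fin.ne_of_val_ne hij.ne)
  rw [wignerMat_apply_of_le x ω le_rfl, wignerMat_apply_of_le x ω le_rfl,
    wignerMat_apply_of_le x ω (Fin.le_def.2 hij.le)] at key
  have hii : -K < x i i ω / √N := by rw [lt_div_iff₀ hN]; linarith [neg_abs_le (x i i ω)]
  have hjj : -K < x j j ω / √N := by rw [lt_div_iff₀ hN]; linarith [neg_abs_le (x j j ω)]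
  have hij' : K + 3 ≤ |x i j ω / √N| := by rw [abs_div, abs_of_pos hN, le_div_iff₀ hN]; exact hoff
  linarith

theorem sq_mul_measureReal_abs_ge_le_integral_sq {ν : Measure ℝ}
    (h2 : Integrable (fun t => t ^ 2) ν) {a : ℝ} (ha : 0 ≤ a) :
    a ^ 2 * ν.real {t | a ≤ |t|} ≤ ∫ t, t ^ 2 ∂ν := by
  convert mul_meas_ge_le_integral_of_nonneg (ae_of_all _ fun t => sq_nonneg t) h2 (a ^ 2) using 4
  ext t
  simp [sq_le_sq, abs_of_nonneg ha]

theorem one_sub_pow_le_exp_neg_mul {q : ℝ} (hq : q ≤ 1) (k : ℕ) :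
    (1 - q) ^ k ≤ Real.exp (-(k * q)) := by
  rw [neg_mul_eq_mul_neg, Real.exp_nat_mul]
  exact pow_le_pow_left₀ (by linarith) (by linarith [Real.add_one_le_exp (-q)]) k

theorem exists_frequently_le_sq_mul_of_not_tendsto {g : ℝ → ℝ} (hg : Antitone g)
    (hg0 : ∀ s, 0 ≤ g s) (h : ¬Tendsto (fun s => s ^ 4 * g s) atTop (nhds 0)) {c : ℝ}
    (hc : 0 < c) : ∃ β > 0, ∃ᶠ m : ℕ in atTop, β ≤ (m : ℝ) ^ 2 * g (c * √m) := by
  obtain ⟨ε, hε, hfreq⟩ : ∃ ε > 0, ∃ᶠ s in atTop, ε ≤ s ^ 4 * g s := by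
    rw [Metric.tendsto_nhds] at h
    push Not at h
    obtain ⟨ε, hε, h⟩ := h
    refine ⟨ε, hε, h.mono fun s hs => ?_⟩
    rwa [Real.dist_eq, sub_zero, abs_of_nonneg (mul_nonneg (by positivity) (hg0 s))] at hs
  refine ⟨ε / (4 * c ^ 4), by positivity, ?_⟩
  have hfloor : Tendsto (fun s : ℝ => ⌊s ^ 2 / c ^ 2⌋₊) atTop atTop :=
    tendsto_nat_floor_atTop.comp ((tendsto_pow_atTop two_ne_zero).atTop_div_const (by positivity))
  refine hfloor.frequently_map _ (fun s ⟨hs, hcs⟩ => ?_)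
    (hfreq.and_eventually (eventually_ge_atTop c))
  set m := ⌊s ^ 2 / c ^ 2⌋₊
  have hs0 : 0 < s := hc.trans_le hcs
  have hm_le : (m : ℝ) ≤ s ^ 2 / c ^ 2 := Nat.floor_le (by positivity)
  have hm_lt : s ^ 2 / c ^ 2 < m + 1 := Nat.lt_floor_add_one _
  have hm1 : (1 : ℝ) ≤ m := by
    exact_mod_cast Nat.le_floor (by rw [Nat.cast_one, one_le_div (by positivity)]; nlinarith)
  have hthr : c * √m ≤ s := by
    rw [le_div_iff₀ (by positivity)] at hm_le
    calc c * √m = √(c ^ 2 * m) := by rw [Real.sqrt_mul (by positivity), Real.sqrt_sq hc.le]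
      _ ≤ √(s ^ 2) := Real.sqrt_le_sqrt (by linarith)
      _ = s := Real.sqrt_sq hs0.le
  have hs4 : s ^ 4 ≤ 4 * c ^ 4 * m ^ 2 := by
    rw [div_lt_iff₀ (by positivity)] at hm_lt
    calc s ^ 4 = (s ^ 2) ^ 2 := by ring
      _ ≤ (2 * m * c ^ 2) ^ 2 := by gcongr; nlinarith
      _ = 4 * c ^ 4 * m ^ 2 := by ring
  calc ε / (4 * c ^ 4) ≤ m ^ 2 * (ε / s ^ 4) := by
        rw [mul_div_assoc', div_le_div_iff₀ (by positivity) (by positivity)]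
        nlinarith [mul_le_mul_of_nonneg_left hs4 hε.le]
    _ ≤ m ^ 2 * g s := by gcongr; rwa [div_le_iff₀ (by positivity), mul_comm]
    _ ≤ m ^ 2 * g (c * √m) := by gcongr; exact hg hthr

theorem ProbabilityTheory.iIndepFun.measureReal_biInter_diff_biInter {ι Ω E : Type*}
    [MeasurableSpace Ω] [MeasurableSpace E] {μ : Measure Ω} [IsProbabilityMeasure μ]
    {X : ι → Ω → E} (hX : iIndepFun X μ) (hXm : ∀ i, Measurable (X i)) {S T : Finset ι}
    (hST : Disjoint S T) {A B : ι → Set E} (hA : ∀ i, MeasurableSet (A i))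
    (hB : ∀ i, MeasurableSet (B i)) :
    μ.real ((⋂ i ∈ S, X i ⁻¹' A i) \ ⋂ i ∈ T, X i ⁻¹' B i) =
      (∏ i ∈ S, μ.real (X i ⁻¹' A i)) * (1 - ∏ i ∈ T, μ.real (X i ⁻¹' B i)) := by
  classical
  set C := S.piecewise A B
  have hC : ∀ i, MeasurableSet (C i) := fun i => by by_cases hi : i ∈ S <;> simp [C, hi, hA, hB]
  have hCS : ∀ i ∈ S, X i ⁻¹' A i = X i ⁻¹' C i := fun i hi => by
    simp only [C, S.piecewise_eq_of_mem _ _ hi]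
  have hCT : ∀ i ∈ T, X i ⁻¹' B i = X i ⁻¹' C i := fun i hi => by
    simp only [C, S.piecewise_eq_of_notMem _ _ (disjoint_right.1 hST hi)]
  have hprod : ∀ U : Finset ι, μ.real (⋂ i ∈ U, X i ⁻¹' C i) = ∏ i ∈ U, μ.real (X i ⁻¹' C i) := by
    intro U
    rw [measureReal_def, hX.meas_biInter fun i _ => ⟨C i, hC i, rfl⟩, ENNReal.toReal_prod]
    rfl
  have hTm : MeasurableSet (⋂ i ∈ T, X i ⁻¹' C i) :=
    Finset.measurableSet_biInter T fun i _ => hXm i (hC i)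
  rw [Set.iInter₂_congr hCS, Set.iInter₂_congr hCT,
    prod_congr rfl fun i hi => congrArg μ.real (hCS i hi),
    prod_congr (s₁ := T) rfl fun i hi => congrArg μ.real (hCT i hi)]
  calc μ.real ((⋂ i ∈ S, X i ⁻¹' C i) \ ⋂ i ∈ T, X i ⁻¹' C i)
      = μ.real (⋂ i ∈ S, X i ⁻¹' C i) - μ.real (⋂ i ∈ S ∪ T, X i ⁻¹' C i) := by
        rw [set_biInter_inter]; exact eq_sub_of_add_eq' (measureReal_inter_add_sdiff hTm)
    _ = (∏ i ∈ S, μ.real (X i ⁻¹' C i)) * (1 - ∏ i ∈ T, μ.real (X i ⁻¹' C i)) := by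
        rw [hprod, hprod, prod_union hST]; ring

theorem measureReal_preimage_abs_lt {Ω : Type*} [MeasurableSpace Ω] {μ : Measure Ω}
    [IsProbabilityMeasure μ] {X : Ω → ℝ} (hX : Measurable X) {ν : Measure ℝ}
    (hν : μ.map X = ν) (r : ℝ) : μ.real (X ⁻¹' {t | |t| < r}) = 1 - ν.real {t | r ≤ |t|} := by
  have hr : MeasurableSet {t : ℝ | r ≤ |t|} := measurableSet_le measurable_const measurable_abs
  have hcompl : {t : ℝ | |t| < r} = {t | r ≤ |t|}ᶜ := by ext; simp
  rw [hcompl, Set.preimage_compl, probReal_compl_eq_one_sub (hX hr), ← map_measureReal_apply hX hr,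
    hν]

@[simps]
def diagIndex : ℕ ↪ {p : ℕ × ℕ // p.1 ≤ p.2} where
  toFun k := ⟨(k, k), le_rfl⟩
  inj' _ _ h := by simpa using h

@[simps]
def strictUpperIndex : ℕ × ℕ ↪ {p : ℕ × ℕ // p.1 ≤ p.2} where
  toFun p := ⟨(p.1, p.1 + p.2 + 1), by omega⟩
  inj' a b h := by
    simp only [Subtype.mk.injEq, Prod.mk.injEq] at h
    exact Prod.ext h.1 (by omega)

theorem le_measureReal_three_le_maxEig_wignerMat {Ω : Type} [MeasureSpace Ω]
    [IsProbabilityMeasure (ℙ : Measure Ω)] {ν ν' : Measure ℝ} {x : ℕ → ℕ → Ω → ℝ}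
    (hmeas : ∀ i j, Measurable (x i j))
    (hindep : iIndepFun (fun p : {p : ℕ × ℕ // p.1 ≤ p.2} => x p.1.1 p.1.2) ℙ)
    (hlawOff : ∀ i j : ℕ, i < j → Measure.map (x i j) ℙ = ν)
    (hlawDiag : ∀ i : ℕ, Measure.map (x i i) ℙ = ν') (m : ℕ) (K : ℝ) :
    (1 - ν'.real {t | K * √(2 * m : ℕ) ≤ |t|}) ^ (2 * m) *
        (1 - (1 - ν.real {t | (K + 3) * √(2 * m : ℕ) ≤ |t|}) ^ (m ^ 2)) ≤
      (ℙ : Measure Ω).real {ω | 3 ≤ maxEig (wignerMat x (2 * m) ω)} := by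
  set r : ℝ := √(2 * m : ℕ)
  have hST :
      Disjoint ((range (2 * m)).map diagIndex) ((range m ×ˢ range m).map strictUpperIndex) := by
    simp only [disjoint_left, Finset.mem_map, mem_range, mem_product, Subtype.ext_iff,
      diagIndex_apply_coe, strictUpperIndex_apply_coe, Prod.exists, Prod.mk.injEq, not_exists,
      not_and, and_imp, forall_exists_index, Subtype.forall, Prod.forall]
    omega
  have hE := hindep.measureReal_biInter_diff_biInter (fun p => hmeas _ _) hST
    (A := fun _ => {t | |t| < K * r}) (B := fun _ => {t | |t| < (K + 3) * r})
    (fun _ => measurableSet_lt measurable_abs measurable_const)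
    (fun _ => measurableSet_lt measurable_abs measurable_const)
  simp only [prod_map, diagIndex_apply_coe, strictUpperIndex_apply_coe] at hE
  rw [prod_congr rfl fun k _ => measureReal_preimage_abs_lt (hmeas k k) (hlawDiag k) _,
    prod_congr (s₁ := range m ×ˢ range m) rfl
      fun p _ => measureReal_preimage_abs_lt (hmeas _ _) (hlawOff p.1 _ (by omega)) _,
    prod_const, prod_const, card_range, card_product, card_range, ← sq] at hE
  rw [← hE]
  refine measureReal_mono fun ω ⟨hD, hB⟩ => ?_
  have hdiag : ∀ k < 2 * m, |x k k ω| < K * r := fun k hk =>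
    Set.mem_iInter₂.1 hD (diagIndex k) (mem_map_of_mem _ (mem_range.2 hk))
  obtain ⟨a, ha, b, hb, hab⟩ : ∃ a < m, ∃ b < m, (K + 3) * r ≤ |x a (a + b + 1) ω| := by
    by_contra! h
    refine hB (Set.mem_iInter₂.2 fun p hp => ?_)
    obtain ⟨⟨a, b⟩, hab, rfl⟩ := mem_map.1 hp
    rw [mem_product, mem_range, mem_range] at hab
    exact h a hab.1 b hab.2
  exact three_le_maxEig_wignerMat (by omega) (by omega) (hdiag a (by omega))
    (hdiag _ (by omega)) hab

theorem half_le_one_sub_measureReal_pow {ν : Measure ℝ} [IsProbabilityMeasure ν]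
    (h2 : Integrable (fun t => t ^ 2) ν) {K : ℝ} (hK0 : 0 < K) (hK : 2 * ∫ t, t ^ 2 ∂ν ≤ K ^ 2)
    (n : ℕ) : 1 / 2 ≤ (1 - ν.real {t | K * √n ≤ |t|}) ^ n := by
  set δ := ν.real {t | K * √n ≤ |t|}
  have hδ : δ ≤ 1 := measureReal_le_one
  have hcheb := sq_mul_measureReal_abs_ge_le_integral_sq h2 (a := K * √n) (by positivity)
  rw [mul_pow, Real.sq_sqrt n.cast_nonneg] at hcheb
  have hnδ : n * δ ≤ 1 / 2 := by
    refine le_of_mul_le_mul_left ?_ (by positivity : 0 < K ^ 2)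
    nlinarith
  calc 1 / 2 ≤ 1 + n * -δ := by linarith
    _ ≤ (1 + -δ) ^ n := one_add_mul_le_pow (by linarith [hδ]) n
    _ = (1 - δ) ^ n := by rw [← sub_eq_add_neg]

theorem stmt_0_general {Ω : Type} [MeasureSpace Ω] [IsProbabilityMeasure (ℙ : Measure Ω)]
    (ν ν' : Measure ℝ) [IsProbabilityMeasure ν] [IsProbabilityMeasure ν']
    (hν'_int2 : Integrable (fun t => t ^ 2) ν')
    (x : ℕ → ℕ → Ω → ℝ)
    (hmeas : ∀ i j, Measurable (x i j))
    (hindep : iIndepFun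
      (fun p : {p : ℕ × ℕ // p.1 ≤ p.2} => x p.1.1 p.1.2) ℙ)
    (hlawOff : ∀ i j : ℕ, i < j → Measure.map (x i j) ℙ = ν)
    (hlawDiag : ∀ i : ℕ, Measure.map (x i i) ℙ = ν')
    (htail : ¬ Tendsto (fun s : ℝ => s ^ 4 * (ν {t | s ≤ |t|}).toReal) atTop (nhds 0)) :
    0 < Filter.limsup
      (fun N : ℕ => (ℙ {ω | 3 ≤ maxEig (wignerMat x N ω)}).toReal) atTop := by
  set K : ℝ := ∫ t, t ^ 2 ∂ν' + 1
  have hmoment : 0 ≤ ∫ t, t ^ 2 ∂ν' := integral_nonneg fun t => sq_nonneg t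
  have hK : 2 * ∫ t, t ^ 2 ∂ν' ≤ K ^ 2 := by nlinarith
  obtain ⟨β, hβ, hfreq⟩ := exists_frequently_le_sq_mul_of_not_tendsto
    (g := fun s => ν.real {t | s ≤ |t|})
    (fun _ _ hss' => measureReal_mono fun _ ht => hss'.trans ht)
    (fun _ => measureReal_nonneg) htail (c := (K + 3) * √2) (by positivity)
  refine (div_pos (sub_pos.2 (Real.exp_lt_one_iff.2 (neg_neg_of_pos hβ))) two_pos).trans_le
    (le_limsup_of_frequently_le ?_ (isBoundedUnder_of ⟨1, fun N => measureReal_le_one⟩))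
  have hdouble : Tendsto (fun m : ℕ => 2 * m) atTop atTop := tendsto_id.const_mul_atTop' two_pos
  refine hdouble.frequently_map _ (fun m hm => ?_) hfreq
  have hr : √2 * √m = √(2 * m : ℕ) := by rw [← Real.sqrt_mul zero_le_two]; push_cast; rfl
  rw [mul_assoc, hr] at hm
  calc (1 - Real.exp (-β)) / 2
      ≤ 1 / 2 * (1 - (1 - ν.real {t | (K + 3) * √(2 * m : ℕ) ≤ |t|}) ^ (m ^ 2)) := by
        rw [div_eq_inv_mul, one_div]
        gcongr
        refine (one_sub_pow_le_exp_neg_mul measureReal_le_one _).trans (Real.exp_le_exp.2 ?_)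
        rw [Nat.cast_pow]
        linarith
    _ ≤ _ := by
        refine mul_le_mul_of_nonneg_right
          (half_le_one_sub_measureReal_pow hν'_int2 (by positivity) hK _) (sub_nonneg.2 ?_)
        exact pow_le_one₀ (sub_nonneg.2 measureReal_le_one) (sub_le_self _ measureReal_nonneg)
    _ ≤ _ := le_measureReal_three_le_maxEig_wignerMat hmeas hindep hlawOff hlawDiag m K

/-- **Necessary condition for edge universality.**  Let `(H_N)` be standard symmetric
Wigner matrices with off-diagonal entry distribution `ν` (centered, unit variance) and
diagonal distribution `ν'` (centered, finite variance).  If it is NOT the case that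
`s⁴ P(|x₁₂| ≥ s) → 0` as `s → ∞`, then `limsup_N P(λ_N(H_N) ≥ 3) > 0`. -/
theorem stmt_0 {Ω : Type} [MeasureSpace Ω] [IsProbabilityMeasure (ℙ : Measure Ω)]
    (ν ν' : Measure ℝ) [IsProbabilityMeasure ν] [IsProbabilityMeasure ν']
    (hν_int1 : Integrable (fun t => t) ν) (hν_mean : ∫ t, t ∂ν = 0)
    (hν_int2 : Integrable (fun t => t ^ 2) ν) (hν_var : ∫ t, t ^ 2 ∂ν = 1)
    (hν'_int1 : Integrable (fun t => t) ν') (hν'_mean : ∫ t, t ∂ν' = 0)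
    (hν'_int2 : Integrable (fun t => t ^ 2) ν')
    (x : ℕ → ℕ → Ω → ℝ)
    (hmeas : ∀ i j, Measurable (x i j))
    (hindep : iIndepFun
      (fun p : {p : ℕ × ℕ // p.1 ≤ p.2} => x p.1.1 p.1.2) ℙ)
    (hlawOff : ∀ i j : ℕ, i < j → Measure.map (x i j) ℙ = ν)
    (hlawDiag : ∀ i : ℕ, Measure.map (x i i) ℙ = ν')
    (htail : ¬ Tendsto (fun s : ℝ => s ^ 4 * (ν {t | s ≤ |t|}).toReal) atTop (nhds 0)) :
    0 < Filter.limsup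
      (fun N : ℕ => (ℙ {ω | 3 ≤ maxEig (wignerMat x N ω)}).toReal) atTop :=
  stmt_0_general ν ν' hν'_int2 x hmeas hindep hlawOff hlawDiag htail
end

section
/- For every z ∈ ℂ with Im z > 0 there exists a unique m ∈ ℂ with Im m > 0 satisfying m + 1/(z + m) = 0 (equivalently, m² + zm + 1 = 0). -/
/-!
For `z + m ≠ 0` the equation `m + 1/(z + m) = 0` is the quadratic `m² + zm + 1 = 0`. Its two
roots have product `1`, so the second root is `m⁻¹`, and `Im m⁻¹ = -Im m / |m|²` has the opposite
sign to `Im m`: at most one root lies in the upper half-plane. Their sum is `-z`, so their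
imaginary parts add up to `-Im z < 0` and one of them does.
-/

section Field

variable {K : Type*} [Field K] {z m m₁ m₂ : K}

theorem add_one_div_add_eq_zero_iff (h : z + m ≠ 0) :
    m + 1 / (z + m) = 0 ↔ m ^ 2 + z * m + 1 = 0 := by
  field_simp
  constructor <;> intro h' <;> linear_combination h'

theorem inv_eq_neg_sub_of_quadratic_eq_zero (hm : m ^ 2 + z * m + 1 = 0) : m⁻¹ = -z - m :=
  inv_eq_of_mul_eq_one_right (by linear_combination -hm)

theorem quadratic_eq_zero_inv (hm : m ^ 2 + z * m + 1 = 0) : m⁻¹ ^ 2 + z * m⁻¹ + 1 = 0 := by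
  rw [inv_eq_neg_sub_of_quadratic_eq_zero hm]
  linear_combination hm

theorem eq_inv_of_quadratic_eq_zero_of_ne (h₁ : m₁ ^ 2 + z * m₁ + 1 = 0)
    (h₂ : m₂ ^ 2 + z * m₂ + 1 = 0) (hne : m₁ ≠ m₂) : m₂ = m₁⁻¹ := by
  have hfactor : (m₁ - m₂) * (m₁ + m₂ + z) = 0 := by linear_combination h₁ - h₂
  have hsum := (mul_eq_zero.1 hfactor).resolve_left (sub_ne_zero.2 hne)
  rw [inv_eq_neg_sub_of_quadratic_eq_zero h₁]
  linear_combination hsum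

end Field

namespace Complex

theorem inv_im_neg_iff {m : ℂ} : m⁻¹.im < 0 ↔ 0 < m.im := by
  rcases eq_or_ne m 0 with rfl | hm
  · simp
  rw [inv_im, neg_div, neg_lt_zero, div_pos_iff_of_pos_right (normSq_pos.2 hm)]

theorem eq_of_quadratic_eq_zero_of_im_pos {z m₁ m₂ : ℂ} (h₁ : m₁ ^ 2 + z * m₁ + 1 = 0)
    (h₂ : m₂ ^ 2 + z * m₂ + 1 = 0) (hp₁ : 0 < m₁.im) (hp₂ : 0 < m₂.im) : m₁ = m₂ := by
  by_contra hne
  have hneg := inv_im_neg_iff.2 hp₁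
  rw [← eq_inv_of_quadratic_eq_zero_of_ne h₁ h₂ hne] at hneg
  linarith

theorem exists_quadratic_eq_zero_im_pos {z : ℂ} (hz : 0 < z.im) :
    ∃ m : ℂ, 0 < m.im ∧ m ^ 2 + z * m + 1 = 0 := by
  obtain ⟨m, hm⟩ :=
    exists_quadratic_eq_zero one_ne_zero (IsAlgClosed.exists_eq_mul_self (discrim 1 z 1))
  replace hm : m ^ 2 + z * m + 1 = 0 := by linear_combination hm
  have him : m⁻¹.im = -z.im - m.im := by
    simpa using congrArg im (inv_eq_neg_sub_of_quadratic_eq_zero hm)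
  by_cases h : m⁻¹.im < 0
  · exact ⟨m, inv_im_neg_iff.1 h, hm⟩
  · refine ⟨m⁻¹, inv_im_neg_iff.1 ?_, quadratic_eq_zero_inv hm⟩
    rw [inv_inv]
    linarith

end Complex

/-- **Existence and uniqueness of the Stieltjes transform of the semicircle law.**
For every `z ∈ ℂ` with `Im z > 0` there exists a unique `m ∈ ℂ` with `Im m > 0`
satisfying the self-consistent equation `m + 1/(z + m) = 0`. -/
theorem stmt_9 (z : ℂ) (hz : 0 < z.im) :
    ∃! m : ℂ, 0 < m.im ∧ m + 1 / (z + m) = 0 := by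
  have hadd : ∀ m : ℂ, 0 < m.im → z + m ≠ 0 := fun m hm h => by
    have him := congrArg Complex.im h
    rw [Complex.add_im, Complex.zero_im] at him
    linarith
  obtain ⟨m, hm, hq⟩ := Complex.exists_quadratic_eq_zero_im_pos hz
  refine ⟨m, ⟨hm, (add_one_div_add_eq_zero_iff (hadd m hm)).2 hq⟩, ?_⟩
  rintro m' ⟨hm', h⟩
  exact Complex.eq_of_quadratic_eq_zero_of_im_pos
    ((add_one_div_add_eq_zero_iff (hadd m' hm')).1 h) hq hm' hm
end

section
/- There exists a universal constant C ≥ 1 such that for every z = E + iη with |E| ≤ 5 and 0 < η ≤ 10, writing κ := ||E| − 2|: C^{−1} ≤ |m_sc(z)| ≤ C and C^{−1}√(κ + η) ≤ |1 − m_sc(z)²| ≤ C√(κ + η). -/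
/-!
The defining equation says `m (z + m) = -1`, i.e. `m² + z m + 1 = 0`. Taking imaginary parts
after multiplying by `conj m` gives `|m|² (Im z + Im m) = Im m`, so `|m| < 1`, while
`|m| |z + m| = 1` gives `|m| ≥ 1 / (|z| + 1)`. The quadratic equation also yields
`(1 - m²)² = m² (z - 2)(z + 2)`, and for `z = E + iη` in the given box the product
`|z - 2| |z + 2|` is comparable to `κ + η`: the factor at the nearer edge `±2` is comparable
to `κ + η`, the other to `1`.
-/
open Complex

section QuadraticEquation

variable {z m : ℂ}

lemma mul_add_eq_neg_one_of_add_one_div_eq_zero (hm0 : m ≠ 0) (hm : m + 1 / (z + m) = 0) :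
    m * (z + m) = -1 := by
  have hzm : z + m ≠ 0 := fun h => hm0 (by simpa [h] using hm)
  field_simp at hm
  linear_combination hm

/-- Multiply `m (z + m) = -1` by `conj m` and take imaginary parts. -/
lemma normSq_mul_im_add_eq_im (h : m * (z + m) = -1) :
    normSq m * (z.im + m.im) = m.im := by
  have h' : (normSq m : ℂ) * (z + m) = -(starRingEnd ℂ m) := by
    rw [normSq_eq_conj_mul_self, mul_assoc, h]; ring
  simpa using congrArg Complex.im h'

lemma norm_lt_one_of_mul_add_eq_neg_one (hz : 0 < z.im) (hm : 0 < m.im)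
    (h : m * (z + m) = -1) : ‖m‖ < 1 := by
  have hsq : normSq m < 1 := by
    have := normSq_mul_im_add_eq_im h
    by_contra! hge
    nlinarith
  rw [normSq_eq_norm_sq] at hsq
  nlinarith [norm_nonneg m]

lemma inv_norm_add_one_le_norm_of_mul_add_eq_neg_one (h : m * (z + m) = -1) (hm1 : ‖m‖ ≤ 1) :
    (‖z‖ + 1)⁻¹ ≤ ‖m‖ := by
  have hprod : ‖m‖ * ‖z + m‖ = 1 := by rw [← norm_mul, h, norm_neg, norm_one]
  have := norm_add_le z m
  rw [inv_le_iff_one_le_mul₀ (by positivity)]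
  nlinarith [norm_nonneg m]

lemma one_sub_sq_sq_of_mul_add_eq_neg_one (h : m * (z + m) = -1) :
    (1 - m ^ 2) ^ 2 = m ^ 2 * (z ^ 2 - 4) := by
  linear_combination (m ^ 2 - z * m + 1) * h

lemma norm_one_sub_sq_of_mul_add_eq_neg_one (h : m * (z + m) = -1) :
    ‖1 - m ^ 2‖ = ‖m‖ * √‖z ^ 2 - 4‖ := by
  rw [← Real.sqrt_sq (norm_nonneg (1 - m ^ 2)), ← norm_pow, one_sub_sq_sq_of_mul_add_eq_neg_one h,
    norm_mul, norm_pow, Real.sqrt_mul (by positivity), Real.sqrt_sq (norm_nonneg m)]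

end QuadraticEquation

section DistanceToEdges

variable (E η : ℝ)

/-- For `E < 0`, `|E| + iη = -conj z`, and `(-conj z) ^ 2 - 4 = conj (z ^ 2 - 4)`. -/
lemma norm_sq_sub_four_abs_re :
    ‖(((|E| : ℝ) : ℂ) + η * I) ^ 2 - 4‖ = ‖((E : ℂ) + η * I) ^ 2 - 4‖ := by
  rcases le_or_gt 0 E with hE | hE
  · rw [abs_of_nonneg hE]
  · rw [abs_of_neg hE, ← norm_conj]
    congr 1
    simp [map_sub, map_pow, map_ofNat]
    ring

variable {E η}

lemma abs_sub_two_add_le_norm_sq_sub_four (hE : 0 ≤ E) (hη : 0 ≤ η) :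
    |E - 2| + η ≤ ‖((E : ℂ) + η * I) ^ 2 - 4‖ := by
  set w : ℂ := E + η * I
  have hfac : w ^ 2 - 4 = (w - 2) * (w + 2) := by ring
  have h1 : |E - 2| ≤ ‖w - 2‖ := by simpa [w] using abs_re_le_norm (w - 2)
  have h2 : η ≤ ‖w - 2‖ := by simpa [w, abs_of_nonneg hη] using abs_im_le_norm (w - 2)
  have h3 : E + 2 ≤ ‖w + 2‖ := by
    simpa [w, abs_of_nonneg (by linarith : (0 : ℝ) ≤ E + 2)] using abs_re_le_norm (w + 2)
  rw [hfac, norm_mul]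
  nlinarith [norm_nonneg (w - 2)]

lemma norm_sq_sub_four_le (hE : 0 ≤ E) (hη : 0 ≤ η) :
    ‖((E : ℂ) + η * I) ^ 2 - 4‖ ≤ (E + 2 + η) * (|E - 2| + η) := by
  set w : ℂ := E + η * I
  have hfac : w ^ 2 - 4 = (w - 2) * (w + 2) := by ring
  have h1 : ‖w - 2‖ ≤ |E - 2| + η := by
    simpa [w, abs_of_nonneg hη] using norm_le_abs_re_add_abs_im (w - 2)
  have h2 : ‖w + 2‖ ≤ E + 2 + η := by
    simpa [w, abs_of_nonneg hη, abs_of_nonneg (by linarith : (0 : ℝ) ≤ E + 2)]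
      using norm_le_abs_re_add_abs_im (w + 2)
  rw [hfac, norm_mul, mul_comm]
  exact mul_le_mul h2 h1 (norm_nonneg _) (by positivity)

end DistanceToEdges

/-- There is a universal constant `C ≥ 1` such that for `z = E + iη` with `|E| ≤ 5`,
`0 < η ≤ 10`, and `κ = ||E| - 2|`, the Stieltjes transform `m = m_sc(z)` (the unique
solution of `m + 1/(z+m) = 0` with `Im m > 0`) satisfies `|m| ∼ 1` and
`|1 - m²| ∼ √(κ + η)`. -/
theorem stmt_11 :
    ∃ C : ℝ, 1 ≤ C ∧ ∀ E η : ℝ, |E| ≤ 5 → 0 < η → η ≤ 10 →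
      ∀ m : ℂ, 0 < m.im → m + 1 / (((E : ℂ) + η * Complex.I) + m) = 0 →
        (C⁻¹ ≤ ‖m‖ ∧ ‖m‖ ≤ C) ∧
        (C⁻¹ * Real.sqrt (|(|E| - 2)| + η) ≤ ‖1 - m ^ 2‖ ∧
          ‖1 - m ^ 2‖ ≤ C * Real.sqrt (|(|E| - 2)| + η)) := by
  refine ⟨16, by norm_num, fun E η hE hη hη10 m him hm => ?_⟩
  set z : ℂ := E + η * I
  set κ := |(|E| - 2)|
  have hzm : m * (z + m) = -1 :=
    mul_add_eq_neg_one_of_add_one_div_eq_zero (fun h => by simp [h] at him) hm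
  have hm1 : ‖m‖ ≤ 1 := (norm_lt_one_of_mul_add_eq_neg_one (by simpa [z] using hη) him hzm).le
  have hz : ‖z‖ ≤ |E| + η := by simpa [z, abs_of_pos hη] using norm_le_abs_re_add_abs_im z
  have hm16 : 16⁻¹ ≤ ‖m‖ :=
    calc (16 : ℝ)⁻¹ ≤ (‖z‖ + 1)⁻¹ := by gcongr; linarith
      _ ≤ ‖m‖ := inv_norm_add_one_le_norm_of_mul_add_eq_neg_one hzm hm1
  have hlow : κ + η ≤ ‖z ^ 2 - 4‖ := by
    rw [← norm_sq_sub_four_abs_re]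
    exact abs_sub_two_add_le_norm_sq_sub_four (abs_nonneg E) hη.le
  have hup : ‖z ^ 2 - 4‖ ≤ 16 ^ 2 * (κ + η) := by
    rw [← norm_sq_sub_four_abs_re]
    refine (norm_sq_sub_four_le (abs_nonneg E) hη.le).trans ?_
    gcongr
    linarith
  rw [norm_one_sub_sq_of_mul_add_eq_neg_one hzm]
  refine ⟨⟨hm16, by linarith⟩, ?_, ?_⟩
  · gcongr
  · calc ‖m‖ * √‖z ^ 2 - 4‖ ≤ 1 * √(16 ^ 2 * (κ + η)) := by gcongr
      _ = 16 * √(κ + η) := by rw [one_mul, Real.sqrt_mul (by norm_num), Real.sqrt_sq (by norm_num)]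
end

section
/- There exists a universal constant C ≥ 1 such that for every z = E + iη with |E| ≤ 5 and 0 < η ≤ 10, writing κ := ||E| − 2|: (i) if κ ≥ η and |E| ≥ 2, then C^{−1}·η/√(κ + η) ≤ Im m_sc(z) ≤ C·η/√(κ + η); (ii) if κ ≤ η or |E| ≤ 2, then C^{−1}√(κ + η) ≤ Im m_sc(z) ≤ C√(κ + η). -/
/-!
Write `b = Im m` and `D = η² + E² - 4`. Eliminating `Re m` from the real and imaginary parts of
`m (z + m) = -1` shows that `u = b (b + η)` is the positive root of `4u² + Du - η² = 0`, so
`u ≍ η² / (D + η)` when `D ≥ 0` and `u ≍ |D| + η` when `D ≤ 0`. Near the edge `|E² - 4| ≍ κ`,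
which gives `u ≍ η² / (κ + η)` in case (i) and `u ≍ κ + η` in case (ii). Finally `u ≍ X²` together
with `η ≲ X` forces `b ≍ X`.
-/

lemma quadratic_of_add_inv_eq_zero {z m : ℂ} (hb : m.im ≠ 0) (hm : m + 1 / (z + m) = 0) :
    4 * (m.im * (m.im + z.im)) ^ 2 + (z.im ^ 2 + z.re ^ 2 - 4) * (m.im * (m.im + z.im))
      - z.im ^ 2 = 0 := by
  have hzm : z + m ≠ 0 := fun h => hb (by simp_all)
  have hmul : m * (z + m) = -1 := by
    field_simp at hm
    linear_combination hm
  have hre := congrArg Complex.re hmul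
  have him := congrArg Complex.im hmul
  simp only [Complex.mul_re, Complex.mul_im, Complex.add_re, Complex.add_im, Complex.neg_re,
    Complex.neg_im, Complex.one_re, Complex.one_im, neg_zero] at hre him
  refine (mul_eq_zero.mp ?_).resolve_left hb
  -- built on `m.re * him - m.im * hre`, which says `|m|² (b + η) = b`
  linear_combination ((m.im + z.im) * (z.re * m.im - m.re * (2 * m.im + z.im))
    + (2 * m.im + z.im) ^ 2 * m.re) * him - (2 * m.im + z.im) ^ 2 * m.im * hre

section QuadraticRoot

variable {D η u : ℝ}

lemma quadratic_root_bounds_of_nonneg (hη : 0 ≤ η) (hu : 0 ≤ u)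
    (hroot : 4 * u ^ 2 + D * u - η ^ 2 = 0) (hD : 0 ≤ D) :
    η ^ 2 ≤ u * (D + 2 * η) ∧ u * (D + 2 * η) ≤ 2 * η ^ 2 := by
  have h2u : 2 * u ≤ η := by nlinarith [mul_nonneg hD hu]
  constructor <;> nlinarith

lemma quadratic_root_bounds_of_nonpos (hη : 0 ≤ η) (hu : 0 < u)
    (hroot : 4 * u ^ 2 + D * u - η ^ 2 = 0) (hD : D ≤ 0) :
    -D + 2 * η ≤ 8 * u ∧ u ≤ -D + 2 * η := by
  have h4u : -D ≤ 4 * u := by nlinarith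
  have h2u : η ≤ 2 * u := by nlinarith
  refine ⟨by linarith, le_of_not_gt fun h => ?_⟩
  nlinarith

end QuadraticRoot

section EdgeDistance

variable {E : ℝ}

lemma abs_sq_sub_four_le (hE : |E| ≤ 5) : |E ^ 2 - 4| ≤ 7 * |(|E| - 2)| := by
  rw [← sq_abs E, show |E| ^ 2 - 4 = (|E| - 2) * (|E| + 2) by ring, abs_mul,
    abs_of_nonneg (by positivity : (0 : ℝ) ≤ |E| + 2), mul_comm]
  gcongr
  linarith

lemma four_mul_le_sq_sub_four (hE : 2 ≤ |E|) : 4 * |(|E| - 2)| ≤ E ^ 2 - 4 := by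
  rw [abs_of_nonneg (by linarith), ← sq_abs E]
  nlinarith

lemma two_mul_le_four_sub_sq (hE : |E| ≤ 2) : 2 * |(|E| - 2)| ≤ 4 - E ^ 2 := by
  rw [abs_of_nonpos (by linarith), ← sq_abs E]
  nlinarith [abs_nonneg E]

end EdgeDistance

section EdgeRoot

variable {E η u : ℝ} (hE : |E| ≤ 5) (hη : 0 < η) (hu : 0 < u)
  (hroot : 4 * u ^ 2 + (η ^ 2 + E ^ 2 - 4) * u - η ^ 2 = 0)
include hE hη hu hroot

lemma root_le : u ≤ 7 * (|(|E| - 2)| + η) := by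
  have h7κ := abs_le.1 (abs_sq_sub_four_le hE)
  rcases le_total 0 (η ^ 2 + E ^ 2 - 4) with hD | hD
  · have := (quadratic_root_bounds_of_nonneg hη.le hu.le hroot hD).2
    nlinarith
  · have := (quadratic_root_bounds_of_nonpos hη.le hu hroot hD).2
    nlinarith

lemma root_bounds_of_le_dist_edge (hη10 : η ≤ 10) (hηκ : η ≤ |(|E| - 2)|) (hE2 : 2 ≤ |E|) :
    η ^ 2 ≤ 12 * ((|(|E| - 2)| + η) * u) ∧ (|(|E| - 2)| + η) * u ≤ η ^ 2 := by
  have h4κ := four_mul_le_sq_sub_four hE2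
  have h7κ := (abs_le.1 (abs_sq_sub_four_le hE)).2
  have hD : 0 ≤ η ^ 2 + E ^ 2 - 4 := by nlinarith [abs_nonneg (|E| - 2)]
  obtain ⟨hlow, hupp⟩ := quadratic_root_bounds_of_nonneg hη.le hu.le hroot hD
  constructor <;> nlinarith

lemma le_root_of_dist_edge_le_or_inside (hη10 : η ≤ 10)
    (hcase : |(|E| - 2)| ≤ η ∨ |E| ≤ 2) : |(|E| - 2)| + η ≤ 300 * u := by
  have h7κ := (abs_le.1 (abs_sq_sub_four_le hE)).2
  rcases le_total 0 (η ^ 2 + E ^ 2 - 4) with hD | hD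
  · have hκ : |(|E| - 2)| ≤ 5 * η := by
      rcases hcase with h | h
      · linarith
      · nlinarith [two_mul_le_four_sub_sq h]
    have hlow := (quadratic_root_bounds_of_nonneg hη.le hu.le hroot hD).1
    have : η ≤ 47 * u := le_of_not_gt fun h => by nlinarith
    linarith
  · have hlow := (quadratic_root_bounds_of_nonpos hη.le hu hroot hD).1
    rcases le_or_gt |(|E| - 2)| η with h | h
    · linarith
    · have hE2 : |E| ≤ 2 := hcase.resolve_left h.not_ge
      have h2κ := two_mul_le_four_sub_sq hE2
      have hκ2 : |(|E| - 2)| ≤ 2 := by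
        rw [abs_of_nonpos (by linarith)]
        linarith [abs_nonneg E]
      nlinarith

end EdgeRoot

lemma comparable_of_mul_self_add_comparable {b η X c C : ℝ} (hb : 0 < b) (hη : 0 ≤ η)
    (hηX : η ≤ 4 * X) (hc : 1 ≤ c) (hC : 5 * c + 1 ≤ C)
    (hlow : X ^ 2 ≤ c * (b * (b + η))) (hupp : b * (b + η) ≤ c * X ^ 2) :
    C⁻¹ * X ≤ b ∧ b ≤ C * X := by
  have hX : 0 ≤ X := by linarith
  have hCpos : 0 < C := by linarith
  constructor
  · rw [inv_mul_le_iff₀ hCpos]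
    have : X ≤ (5 * c + 1) * b := le_of_not_gt fun h => by
      have hXpos : 0 < X := lt_of_le_of_lt (by positivity) h
      have hbη : c * (b * η) ≤ c * (b * (4 * X)) := by gcongr
      have hXX : (5 * c + 1) * b * X < X * X := by gcongr
      have hbX : b * ((5 * c + 1) * b) < b * X := by gcongr
      nlinarith
    nlinarith
  · have hcX : c * X ^ 2 ≤ (c * X) ^ 2 := by
      have hc0 : (0 : ℝ) ≤ c := by linarith
      nlinarith [mul_nonneg (sub_nonneg.2 hc) (mul_nonneg hc0 (sq_nonneg X))]
    have hbc : b ≤ c * X := le_of_not_gt fun h => by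
      nlinarith [pow_lt_pow_left₀ h (by positivity) two_ne_zero]
    nlinarith

/-- There is a universal constant `C ≥ 1` such that for `z = E + iη` with `|E| ≤ 5`,
`0 < η ≤ 10`, and `κ = ||E| - 2|`, the imaginary part of the Stieltjes transform
`m = m_sc(z)` satisfies: `Im m ∼ η/√(κ+η)` if `κ ≥ η` and `|E| ≥ 2`, and
`Im m ∼ √(κ+η)` if `κ ≤ η` or `|E| ≤ 2`. -/
theorem stmt_12 :
    ∃ C : ℝ, 1 ≤ C ∧ ∀ E η : ℝ, |E| ≤ 5 → 0 < η → η ≤ 10 →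
      ∀ m : ℂ, 0 < m.im → m + 1 / (((E : ℂ) + η * Complex.I) + m) = 0 →
        ((η ≤ |(|E| - 2)| → 2 ≤ |E| →
          C⁻¹ * (η / Real.sqrt (|(|E| - 2)| + η)) ≤ m.im ∧
            m.im ≤ C * (η / Real.sqrt (|(|E| - 2)| + η))) ∧
        ((|(|E| - 2)| ≤ η ∨ |E| ≤ 2) →
          C⁻¹ * Real.sqrt (|(|E| - 2)| + η) ≤ m.im ∧
            m.im ≤ C * Real.sqrt (|(|E| - 2)| + η))) := by
  refine ⟨2000, by norm_num, fun E η hE hη hη10 m hb hm => ?_⟩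
  have hroot : 4 * (m.im * (m.im + η)) ^ 2 + (η ^ 2 + E ^ 2 - 4) * (m.im * (m.im + η))
      - η ^ 2 = 0 := by
    simpa using quadratic_of_add_inv_eq_zero hb.ne' hm
  have hu : 0 < m.im * (m.im + η) := by positivity
  set s := Real.sqrt (|(|E| - 2)| + η)
  have hs : s ^ 2 = |(|E| - 2)| + η := Real.sq_sqrt (by positivity)
  have hs0 : 0 < s := Real.sqrt_pos.2 (by positivity)
  refine ⟨fun hηκ hE2 => ?_, fun hcase => ?_⟩
  · obtain ⟨hlow, hupp⟩ := root_bounds_of_le_dist_edge hE hη hu hroot hη10 hηκ hE2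
    have hκ3 : |(|E| - 2)| ≤ 3 := abs_le.2 ⟨by linarith [abs_nonneg E], by linarith⟩
    refine comparable_of_mul_self_add_comparable hb hη.le ?_ (c := 12) (by norm_num)
      (by norm_num) ?_ ?_
    · rw [mul_div_assoc', le_div_iff₀ hs0]
      nlinarith
    · rw [div_pow, hs, div_le_iff₀ (by positivity)]
      linarith
    · rw [div_pow, hs, mul_div_assoc', le_div_iff₀ (by positivity)]
      nlinarith
  · have hηs : η ≤ 4 * s := le_of_not_gt fun h => by
      nlinarith [abs_nonneg (|E| - 2), mul_self_lt_mul_self (by positivity) h]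
    have hlow := le_root_of_dist_edge_le_or_inside hE hη hu hroot hη10 hcase
    have hupp := root_le hE hη hu hroot
    exact comparable_of_mul_self_add_comparable hb hη.le hηs (c := 300) (by norm_num)
      (by norm_num) (by nlinarith) (by nlinarith)
end

section
/- For every C > 0 there exists a constant D > 0, depending only on C, such that for all real numbers A and B with |A| ≤ C and B ≥ A² + 1, there exists a probability measure μ on ℝ supported in the interval [−DB, DB] whose first four moments are ∫x dμ = 0, ∫x² dμ = 1, ∫x³ dμ = A, and ∫x⁴ dμ = B. -/
/-!
Take the roots `a < 0 < b` of `x ^ 2 = A * x + (B - A ^ 2)` and the unique law on `{a, 0, b}`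
with mean `0` and variance `1`. Its `(k + 1)`-st moment is `(b ^ k - a ^ k) / (b - a)`, so its
third and fourth moments are `a + b = A` and `a ^ 2 + a * b + b ^ 2 = B`. Its weights are
nonnegative exactly when `a * b ≤ -1`, i.e. `A ^ 2 + 1 ≤ B`, and each root is at most
`|A| + B` in absolute value.
-/

open MeasureTheory

section ThreePoint

variable {α : Type*} [MeasurableSpace α]

noncomputable def threePointMeasure (p q r : ℝ) (a b c : α) : Measure α :=
  ENNReal.ofReal p • Measure.dirac a + ENNReal.ofReal q • Measure.dirac b +
    ENNReal.ofReal r • Measure.dirac c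

variable {p q r : ℝ} {a b c : α}

lemma threePointMeasure_apply_of_mem (hp : 0 ≤ p) (hq : 0 ≤ q) (hr : 0 ≤ r) {s : Set α}
    (ha : a ∈ s) (hb : b ∈ s) (hc : c ∈ s) :
    threePointMeasure p q r a b c s = ENNReal.ofReal (p + q + r) := by
  simp only [threePointMeasure, Measure.add_apply, Measure.smul_apply,
    Measure.dirac_apply_of_mem ha, Measure.dirac_apply_of_mem hb,
    Measure.dirac_apply_of_mem hc, smul_eq_mul, mul_one]
  rw [ENNReal.ofReal_add (add_nonneg hp hq) hr, ENNReal.ofReal_add hp hq]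

lemma integral_threePointMeasure [MeasurableSingletonClass α] {E : Type*}
    [NormedAddCommGroup E] [NormedSpace ℝ E] [CompleteSpace E]
    (hp : 0 ≤ p) (hq : 0 ≤ q) (hr : 0 ≤ r) (f : α → E) :
    ∫ x, f x ∂threePointMeasure p q r a b c = p • f a + q • f b + r • f c := by
  have hint : ∀ (w : ℝ) (x : α), Integrable f (ENNReal.ofReal w • Measure.dirac x) :=
    fun w x ↦ (integrable_dirac enorm_lt_top).smul_measure ENNReal.ofReal_ne_top
  rw [threePointMeasure, integral_add_measure ((hint p a).add_measure (hint q b)) (hint r c),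
    integral_add_measure (hint p a) (hint q b)]
  simp only [integral_smul_measure, integral_dirac, ENNReal.toReal_ofReal hp,
    ENNReal.toReal_ofReal hq, ENNReal.toReal_ofReal hr]

end ThreePoint

section Standardized

noncomputable def standardThreePoint (a b : ℝ) : Measure ℝ :=
  threePointMeasure (-1 / (a * (b - a))) (1 / (b * (b - a))) (1 + 1 / (a * b)) a b 0

variable {a b : ℝ}

lemma standardThreePoint_weights_nonneg (ha : a < 0) (hb : 0 < b) (hab : a * b ≤ -1) :
    0 ≤ -1 / (a * (b - a)) ∧ 0 ≤ 1 / (b * (b - a)) ∧ 0 ≤ 1 + 1 / (a * b) := by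
  have hba : 0 < b - a := by linarith
  refine ⟨div_nonneg_of_nonpos (by norm_num) (mul_nonpos_of_nonpos_of_nonneg ha.le hba.le),
    by positivity, ?_⟩
  rw [← neg_le_iff_add_nonneg', le_div_iff_of_neg (by nlinarith)]
  linarith

lemma standardThreePoint_apply_of_mem (ha : a < 0) (hb : 0 < b) (hab : a * b ≤ -1)
    {s : Set ℝ} (has : a ∈ s) (hbs : b ∈ s) (h0s : 0 ∈ s) :
    standardThreePoint a b s = 1 := by
  obtain ⟨hp, hq, hr⟩ := standardThreePoint_weights_nonneg ha hb hab
  rw [standardThreePoint, threePointMeasure_apply_of_mem hp hq hr has hbs h0s]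
  have hweights : -1 / (a * (b - a)) + 1 / (b * (b - a)) + (1 + 1 / (a * b)) = 1 := by
    have : b - a ≠ 0 := by linarith
    field_simp [ha.ne, hb.ne']
    ring
  rw [hweights, ENNReal.ofReal_one]

lemma isProbabilityMeasure_standardThreePoint (ha : a < 0) (hb : 0 < b) (hab : a * b ≤ -1) :
    IsProbabilityMeasure (standardThreePoint a b) :=
  ⟨standardThreePoint_apply_of_mem ha hb hab trivial trivial trivial⟩

lemma integral_pow_succ_standardThreePoint (ha : a < 0) (hb : 0 < b) (hab : a * b ≤ -1)
    (k : ℕ) : ∫ x, x ^ (k + 1) ∂standardThreePoint a b = (b ^ k - a ^ k) / (b - a) := by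
  obtain ⟨hp, hq, hr⟩ := standardThreePoint_weights_nonneg ha hb hab
  rw [standardThreePoint, integral_threePointMeasure hp hq hr]
  have : b - a ≠ 0 := by linarith
  have : a ≠ 0 := ha.ne
  have : b ≠ 0 := hb.ne'
  simp only [smul_eq_mul, pow_succ]
  field_simp
  ring

end Standardized

lemma exists_neg_pos_add_mul_eq (A s : ℝ) (hs : 0 < s) :
    ∃ a b : ℝ, a < 0 ∧ 0 < b ∧ a + b = A ∧ a * b = -s := by
  set r := Real.sqrt (A ^ 2 + 4 * s)
  have hr : r ^ 2 = A ^ 2 + 4 * s := Real.sq_sqrt (by positivity)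
  have hAr : |A| < r := by
    rw [Real.lt_sqrt (abs_nonneg A), sq_abs]
    linarith
  refine ⟨(A - r) / 2, (A + r) / 2, ?_, ?_, by ring, by linear_combination -hr / 4⟩
  · linarith [le_abs_self A]
  · linarith [neg_abs_le A]

lemma abs_le_of_sq_eq_mul_add {x A s : ℝ} (hx : x ^ 2 = A * x + s) (hs : 1 ≤ s) :
    |x| ≤ |A| + s := by
  rcases le_or_gt |x| 1 with h | h
  · linarith [abs_nonneg A]
  · have : |x| * |x| ≤ (|A| + s) * |x| := by
      nlinarith [abs_mul A x, abs_mul_abs_self x, le_abs_self (A * x), sq_abs x]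
    exact le_of_mul_le_mul_right this (by linarith)

/-- For every `C > 0` there is `D > 0` depending only on `C` such that for all reals
`A, B` with `|A| ≤ C` and `B ≥ A² + 1`, there exists a Borel probability measure `μ` on
`ℝ` supported in `[-DB, DB]` with moments `∫x dμ = 0`, `∫x² dμ = 1`, `∫x³ dμ = A`,
`∫x⁴ dμ = B`. -/
theorem stmt_14 (C : ℝ) (hC : 0 < C) :
    ∃ D : ℝ, 0 < D ∧ ∀ A B : ℝ, |A| ≤ C → A ^ 2 + 1 ≤ B →
      ∃ μ : Measure ℝ, IsProbabilityMeasure μ ∧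
        μ (Set.Icc (-(D * B)) (D * B)) = 1 ∧
        (∫ x, x ∂μ) = 0 ∧ (∫ x, x ^ 2 ∂μ) = 1 ∧
        (∫ x, x ^ 3 ∂μ) = A ∧ (∫ x, x ^ 4 ∂μ) = B := by
  refine ⟨C + 1, by linarith, fun A B hA hB ↦ ?_⟩
  obtain ⟨a, b, ha, hb, hsum, hprod⟩ := exists_neg_pos_add_mul_eq A (B - A ^ 2) (by linarith)
  have hab : a * b ≤ -1 := by linarith
  have hroot_bound :
      ∀ x, x ^ 2 = A * x + (B - A ^ 2) → x ∈ Set.Icc (-((C + 1) * B)) ((C + 1) * B) := by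
    intro x hx
    have hx_le := abs_le_of_sq_eq_mul_add hx (by linarith)
    rw [Set.mem_Icc, ← abs_le]
    nlinarith [sq_nonneg A]
  have hmoment := integral_pow_succ_standardThreePoint ha hb hab
  have hba : b - a ≠ 0 := by linarith
  refine ⟨standardThreePoint a b, isProbabilityMeasure_standardThreePoint ha hb hab,
    standardThreePoint_apply_of_mem ha hb hab (hroot_bound a ?_) (hroot_bound b ?_) ?_,
    ?_, ?_, ?_, ?_⟩
  · linear_combination a * hsum - hprod
  · linear_combination b * hsum - hprod
  · constructor <;> nlinarith
  · simpa using hmoment 0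
  · simpa [div_self hba] using hmoment 1
  · rw [hmoment 2, ← hsum]; field_simp; ring
  · rw [hmoment 3]; field_simp; linear_combination (b - a) * ((a + b + A) * hsum - hprod)
end

section
/- Let X be a real random variable with E X = 0, E X² = 1 and E X⁴ < ∞. Then E X⁴ ≥ 1 + (E X³)². -/
/-!
Put `t = E X³`. The quantity `E (X² - 1 - t X)²` is nonnegative, and expanding it
with `E X = 0`, `E X² = 1` gives exactly `E X⁴ - 1 - t²`.
-/

open MeasureTheory ProbabilityTheory

theorem integral_sq_sq_sub_sub_mul {Ω : Type*} [MeasurableSpace Ω] (μ : Measure Ω)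
    [IsProbabilityMeasure μ] (X : Ω → ℝ) (h1 : Integrable X μ)
    (h2 : Integrable (fun ω => X ω ^ 2) μ) (h3 : Integrable (fun ω => X ω ^ 3) μ)
    (h4 : Integrable (fun ω => X ω ^ 4) μ) (a b : ℝ) :
    ∫ ω, (X ω ^ 2 - a - b * X ω) ^ 2 ∂μ
      = ∫ ω, X ω ^ 4 ∂μ - 2 * b * ∫ ω, X ω ^ 3 ∂μ + (b ^ 2 - 2 * a) * ∫ ω, X ω ^ 2 ∂μ
        + 2 * a * b * ∫ ω, X ω ∂μ + a ^ 2 := by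
  have hexpand : (fun ω => (X ω ^ 2 - a - b * X ω) ^ 2) = fun ω =>
      X ω ^ 4 - 2 * b * X ω ^ 3 + (b ^ 2 - 2 * a) * X ω ^ 2 + 2 * a * b * X ω + a ^ 2 := by
    funext ω; ring
  rw [hexpand, integral_add, integral_add, integral_add, integral_sub, integral_const_mul,
    integral_const_mul, integral_const_mul, integral_const, probReal_univ, one_smul]
  all_goals fun_prop

theorem stmt_15_general {Ω : Type} [MeasureSpace Ω] [IsProbabilityMeasure (ℙ : Measure Ω)]
    (X : Ω → ℝ)
    (h1 : Integrable X) (h2 : Integrable fun ω => (X ω) ^ 2)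
    (h3 : Integrable fun ω => (X ω) ^ 3) (h4 : Integrable fun ω => (X ω) ^ 4)
    (hmean : ∫ ω, X ω = 0) (hvar : ∫ ω, (X ω) ^ 2 = 1) :
    1 + (∫ ω, (X ω) ^ 3) ^ 2 ≤ ∫ ω, (X ω) ^ 4 := by
  set t := ∫ ω, X ω ^ 3
  have hnonneg : 0 ≤ ∫ ω, (X ω ^ 2 - 1 - t * X ω) ^ 2 :=
    integral_nonneg fun ω => sq_nonneg _
  rw [integral_sq_sq_sub_sub_mul ℙ X h1 h2 h3 h4, hmean, hvar] at hnonneg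
  linarith

/-- If `X` is a real random variable with `E X = 0`, `E X² = 1` and finite fourth moment,
then `E X⁴ ≥ 1 + (E X³)²`. -/
theorem stmt_15 {Ω : Type} [MeasureSpace Ω] [IsProbabilityMeasure (ℙ : Measure Ω)]
    (X : Ω → ℝ) (hX : Measurable X)
    (h1 : Integrable X) (h2 : Integrable fun ω => (X ω) ^ 2)
    (h3 : Integrable fun ω => (X ω) ^ 3) (h4 : Integrable fun ω => (X ω) ^ 4)
    (hmean : ∫ ω, X ω = 0) (hvar : ∫ ω, (X ω) ^ 2 = 1) :
    1 + (∫ ω, (X ω) ^ 3) ^ 2 ≤ ∫ ω, (X ω) ^ 4 :=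
  stmt_15_general X h1 h2 h3 h4 hmean hvar
end
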